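/- arXiv:2506.04425 — 6 statements merged into one kernel-verified Lean document; each statement's English description precedes it below -/
import Mathlib

section
/- Let X be a metric space with an isometric action of a finite group G, let H be a real inner product space, and let φ : X → H satisfy α·d(x,y) ≤ ‖φ(x)−φ(y)‖ ≤ β·d(x,y) for all x,y ∈ X. Define ψ : X → (G → H) by ψ(x)(g) = |G|^{-1/2}·φ(g·x), where G → H carries the standard Euclidean structure ‖f‖² = Σ_{g∈G} ‖f(g)‖². Then ψ is G-equivariant for the action (g·f)(h) = f(hg), and satisfies α·d(x,y) ≤ ‖ψ(x)−ψ(y)‖ ≤ β·d(x,y) for all x,y ∈ X. -/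
/-- First equivariant embedding lemma (finite group case): any bilipschitz map
`φ : X → H` can be promoted to a `G`-equivariant map `ψ : X → ℓ²(G, H)` with the
same Lipschitz bounds, where `ψ x g = |G|^{-1/2} • φ (g • x)`. -/
theorem first_equivariant_embedding
    {G X H : Type*} [Group G] [Fintype G] [MetricSpace X] [MulAction G X]
    [NormedAddCommGroup H] [InnerProductSpace ℝ H]
    (hiso : ∀ g : G, Isometry (fun x : X => g • x))
    (φ : X → H) (α β : ℝ)
    (hlow : ∀ x y : X, α * dist x y ≤ ‖φ x - φ y‖)
    (hup : ∀ x y : X, ‖φ x - φ y‖ ≤ β * dist x y)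
    (ψ : X → PiLp 2 (fun _ : G => H))
    (hψ : ∀ (x : X) (g : G), ψ x g = (Real.sqrt (Fintype.card G))⁻¹ • φ (g • x)) :
    (∀ (g : G) (x : X) (h : G), ψ (g • x) h = ψ x (h * g)) ∧
    (∀ x y : X, α * dist x y ≤ ‖ψ x - ψ y‖ ∧ ‖ψ x - ψ y‖ ≤ β * dist x y) := by
  have n0 : (0:ℝ) < Fintype.card G := by exact_mod_cast Fintype.card_pos
  have s0 : (0:ℝ) < Real.sqrt (Fintype.card G) := Real.sqrt_pos.mpr n0
  constructor
  · intro g x h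
    rw [hψ, hψ, mul_smul]
  · intro x y
    have hdist : ∀ g : G, dist (g • x) (g • y) = dist x y := fun g => (hiso g).dist_eq x y
    have hsq : ‖ψ x - ψ y‖ ^ 2 =
        (Fintype.card G : ℝ)⁻¹ * ∑ g : G, ‖φ (g • x) - φ (g • y)‖ ^ 2 := by
      rw [PiLp.norm_sq_eq_of_L2, Finset.mul_sum]
      congr 1
      ext g
      have : (ψ x - ψ y) g = (Real.sqrt (Fintype.card G))⁻¹ • (φ (g • x) - φ (g • y)) := by
        simp [hψ, smul_sub]
      rw [this, norm_smul, mul_pow, norm_inv, Real.norm_eq_abs,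
        abs_of_pos s0, ← Real.sqrt_inv, Real.sq_sqrt (by positivity)]
    have hnonneg : (0:ℝ) ≤ ‖ψ x - ψ y‖ := norm_nonneg _
    constructor
    · rcases le_or_gt (α * dist x y) 0 with h | h
      · exact h.trans hnonneg
      · have hle : (α * dist x y) ^ 2 ≤ ‖ψ x - ψ y‖ ^ 2 := by
          rw [hsq]
          have : (Fintype.card G : ℝ) * (α * dist x y) ^ 2 ≤
              ∑ g : G, ‖φ (g • x) - φ (g • y)‖ ^ 2 := by
            rw [← Finset.card_univ, ← nsmul_eq_mul, ← Finset.sum_const]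
            apply Finset.sum_le_sum
            intro g _
            have := hlow (g • x) (g • y)
            rw [hdist g] at this
            exact pow_le_pow_left₀ h.le this 2
          calc (α * dist x y) ^ 2
              = (Fintype.card G : ℝ)⁻¹ * ((Fintype.card G : ℝ) * (α * dist x y) ^ 2) := by
                field_simp
            _ ≤ _ := by
                exact mul_le_mul_of_nonneg_left this (by positivity)
        nlinarith [hnonneg]
    · have hb : (0:ℝ) ≤ β * dist x y := le_trans (norm_nonneg _) (hup x y)
      have hle : ‖ψ x - ψ y‖ ^ 2 ≤ (β * dist x y) ^ 2 := by
        rw [hsq]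
        have : ∑ g : G, ‖φ (g • x) - φ (g • y)‖ ^ 2 ≤
            (Fintype.card G : ℝ) * (β * dist x y) ^ 2 := by
          rw [← Finset.card_univ, ← nsmul_eq_mul, ← Finset.sum_const]
          apply Finset.sum_le_sum
          intro g _
          have := hup (g • x) (g • y)
          rw [hdist g] at this
          exact pow_le_pow_left₀ (norm_nonneg _) this 2
        calc (Fintype.card G : ℝ)⁻¹ * ∑ g : G, ‖φ (g • x) - φ (g • y)‖ ^ 2
            ≤ (Fintype.card G : ℝ)⁻¹ * ((Fintype.card G : ℝ) * (β * dist x y) ^ 2) :=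
              mul_le_mul_of_nonneg_left this (by positivity)
          _ = (β * dist x y) ^ 2 := by field_simp
      nlinarith [hnonneg, hb]
end

section
/- For every integer r ≥ 2 and every θ ∈ [0, π/r], it holds that 1 − sin²(π/(2r)) + sin²(π/(2r))·cos(rθ) ≤ cos(θ). -/
/-!
Writing `cos x = 1 - 2 sin² (x / 2)` on both sides and `t = rθ / 2 ∈ [0, π/2]`, the inequality
becomes `sin (t / r) ≤ sin (π / (2r)) · sin t`. The difference `sin (π / (2r)) · sin t - sin (t / r)`
is concave in `t` on `[0, π/2]` (Jordan's inequality `sin (π / (2r)) ≥ 1 / r` controls its second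
derivative) and vanishes at both endpoints, so it is nonnegative in between.
-/

open Real Set

lemma one_div_le_sin_pi_div_two_mul {c : ℝ} (hc : 1 ≤ c) : 1 / c ≤ sin (π / (2 * c)) := by
  have h := le_sin_mul (x := 1 / c) (by positivity) (div_le_one_of_le₀ hc (by positivity))
  rwa [show π / 2 * (1 / c) = π / (2 * c) by field_simp] at h

lemma concaveOn_mul_sin_sub_sin_div {c s : ℝ} (hc : 1 ≤ c) (hs : 1 / c ^ 2 ≤ s) :
    ConcaveOn ℝ (Icc 0 (π / 2)) (fun x ↦ s * sin x - sin (x / c)) := by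
  have hc0 : 0 < c := by linarith
  refine concaveOn_of_hasDerivWithinAt2_nonpos (convex_Icc _ _) (by fun_prop)
    (f' := fun x ↦ s * cos x - cos (x / c) / c)
    (f'' := fun x ↦ -(s * sin x) + sin (x / c) / c ^ 2) ?_ ?_ ?_
  · intro x _
    have h := ((hasDerivAt_sin x).const_mul s).sub ((hasDerivAt_id' x).div_const c).sin
    exact (h.congr_deriv (by ring)).hasDerivWithinAt
  · intro x _
    have h := ((hasDerivAt_cos x).const_mul s).sub (((hasDerivAt_id' x).div_const c).cos.div_const c)
    exact (h.congr_deriv (by ring)).hasDerivWithinAt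
  · rw [interior_Icc]
    rintro x ⟨hx0, hx1⟩
    have hsin_div : sin (x / c) ≤ sin x :=
      sin_le_sin_of_le_of_le_pi_div_two (by linarith [pi_pos, div_nonneg hx0.le hc0.le]) hx1.le
        (div_le_self hx0.le hc)
    have hsin : 0 ≤ sin x := sin_nonneg_of_nonneg_of_le_pi hx0.le (by linarith [pi_pos])
    calc -(s * sin x) + sin (x / c) / c ^ 2
        ≤ -(s * sin x) + sin x / c ^ 2 := by gcongr
      _ = (1 / c ^ 2 - s) * sin x := by ring
      _ ≤ 0 := mul_nonpos_of_nonpos_of_nonneg (by linarith) hsin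

theorem sin_div_le_sin_pi_div_two_mul_sin {c t : ℝ} (hc : 1 ≤ c) (ht : t ∈ Icc 0 (π / 2)) :
    sin (t / c) ≤ sin (π / (2 * c)) * sin t := by
  have hs : 1 / c ^ 2 ≤ sin (π / (2 * c)) := by
    refine le_trans ?_ (one_div_le_sin_pi_div_two_mul hc)
    exact one_div_le_one_div_of_le (by positivity) (by nlinarith)
  have h := (concaveOn_mul_sin_sub_sin_div hc hs).min_le_of_mem_Icc
    (left_mem_Icc.2 (by positivity)) (right_mem_Icc.2 (by positivity)) ht
  simp only [sin_zero, mul_zero, zero_div, sin_pi_div_two, mul_one, div_div,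
    sub_self, min_self] at h
  linarith

/-- For every integer `r ≥ 2` and `θ ∈ [0, π/r]`,
`1 − sin²(π/(2r)) + sin²(π/(2r))·cos(rθ) ≤ cos θ`. -/
theorem stmt2 (r : ℕ) (hr : 2 ≤ r) (θ : ℝ) (hθ0 : 0 ≤ θ) (hθ1 : θ ≤ π / r) :
    1 - sin (π / (2 * r)) ^ 2 + sin (π / (2 * r)) ^ 2 * cos (r * θ) ≤ cos θ := by
  have hr1 : (1 : ℝ) ≤ r := by exact_mod_cast (by omega : 1 ≤ r)
  have hrθ : r * θ ≤ π := (le_div_iff₀' (by positivity)).mp hθ1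
  have hkey := sin_div_le_sin_pi_div_two_mul_sin hr1 (t := r * θ / 2) ⟨by positivity, by linarith⟩
  rw [show r * θ / 2 / r = θ / 2 by field_simp] at hkey
  have hhalf : 0 ≤ sin (θ / 2) :=
    sin_nonneg_of_nonneg_of_le_pi (by positivity) (by nlinarith [pi_pos])
  have hsq := pow_le_pow_left₀ hhalf hkey 2
  have hcos_half (x : ℝ) : cos x = 1 - 2 * sin (x / 2) ^ 2 := by
    rw [← cos_two_mul_eq_one_sub, mul_div_cancel₀ x two_ne_zero]
  rw [hcos_half θ, hcos_half (r * θ)]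
  linarith [mul_pow (sin (π / (2 * r))) (sin (r * θ / 2)) 2]
end

section
/- Let z be a complex number with 0 < |z| ≤ 1 and arg(z) ∈ [0, π/r] for an integer r ≥ 2, and set a = sin(π/(2r)). Then a²r²(1 − Re z) ≥ 1 − (1−a²)|z|² − a²·Re(z^r). -/
/-!
Write `z = ρ e^{iθ}` and `s = sin² (π / (2r))`. The inequality splits into a radial and an
angular part. Angularly, `|sin (n x)| ≤ n |sin x|` gives `1 - cos (rθ) ≤ r² (1 - cos θ)`, and
since `ρ^r ≤ ρ` this reduces everything to the case `θ = 0`. Radially, Bernoulli's inequality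
bounds the left side by `(1 - ρ)(2 - 2s + rs)`, so it remains to show `2 ≤ s (r² - r + 2)`:
this is an equality for `r = 2, 3` and follows from `sin x ≥ x - x³/6` for `r ≥ 4`.
-/

open Real

theorem Real.abs_sin_nat_mul_le (n : ℕ) (x : ℝ) : |sin (n * x)| ≤ n * |sin x| := by
  induction n with
  | zero => simp
  | succ n ih =>
    calc |sin ((n + 1 : ℕ) * x)| = |sin (n * x) * cos x + cos (n * x) * sin x| := by
          push_cast; rw [add_mul, one_mul, sin_add]
      _ ≤ |sin (n * x)| * |cos x| + |cos (n * x)| * |sin x| := by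
          rw [← abs_mul, ← abs_mul]; exact abs_add_le _ _
      _ ≤ |sin (n * x)| + |sin x| := by
          gcongr
          · exact mul_le_of_le_one_right (abs_nonneg _) (abs_cos_le_one x)
          · exact mul_le_of_le_one_left (abs_nonneg _) (abs_cos_le_one _)
      _ ≤ (n + 1 : ℕ) * |sin x| := by push_cast; linarith

theorem Real.one_sub_cos_nat_mul_le (n : ℕ) (x : ℝ) :
    1 - cos (n * x) ≤ n ^ 2 * (1 - cos x) := by
  have h := pow_le_pow_left₀ (abs_nonneg _) (abs_sin_nat_mul_le n (x / 2)) 2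
  rw [sq_abs, mul_pow, sq_abs, sin_sq_eq_half_sub, sin_sq_eq_half_sub,
    show 2 * (n * (x / 2)) = n * x by ring, show 2 * (x / 2) = x by ring] at h
  linarith

theorem one_sub_pow_le_mul_one_sub (n : ℕ) {ρ : ℝ} (hρ : 0 ≤ ρ) : 1 - ρ ^ n ≤ n * (1 - ρ) := by
  have := one_add_mul_le_pow (show -2 ≤ ρ - 1 by linarith) n
  rw [add_sub_cancel] at this
  linarith

theorem Complex.re_pow_eq_norm_pow_mul_cos (z : ℂ) (n : ℕ) :
    (z ^ n).re = ‖z‖ ^ n * Real.cos (n * z.arg) := by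
  conv_lhs => rw [← norm_mul_exp_arg_mul_I z]
  rw [mul_pow, ← exp_nat_mul, ← ofReal_pow, re_ofReal_mul, ← mul_assoc, ← ofReal_natCast,
    ← ofReal_mul, exp_ofReal_mul_I_re]

/-- At `x = π / (2 * r)` the polynomial `π ^ 2 - 2 * π * x + 8 * x ^ 2` equals
`4 * x ^ 2 * (r ^ 2 - r + 2)`. -/
theorem eight_mul_sq_le_sin_sq_mul (x : ℝ) (hx0 : 0 ≤ x) (hx : x ≤ π / 8) :
    8 * x ^ 2 ≤ sin x ^ 2 * (π ^ 2 - 2 * π * x + 8 * x ^ 2) := by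
  have hπ1 := pi_gt_d2
  have hπ2 := pi_lt_d2
  have hsin : x * (1 - x ^ 2 / 6) ≤ sin x := by nlinarith [sin_ge_sub_cube hx0]
  have hq : 7 * π ^ 2 / 8 ≤ π ^ 2 - 2 * π * x + 8 * x ^ 2 := by nlinarith [sq_nonneg (x - π / 8)]
  have hc : 0.974 ≤ 1 - x ^ 2 / 6 := by nlinarith
  have hs : x * 0.974 ≤ sin x := by nlinarith
  have hπsq : 9.8 ≤ π ^ 2 := by nlinarith
  calc 8 * x ^ 2 ≤ (x * 0.974) ^ 2 * (7 * π ^ 2 / 8) := by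
        nlinarith [mul_le_mul_of_nonneg_left hπsq (sq_nonneg x)]
    _ ≤ sin x ^ 2 * (π ^ 2 - 2 * π * x + 8 * x ^ 2) := by gcongr

theorem two_le_sin_sq_pi_div_two_mul_mul (r : ℕ) (hr : 2 ≤ r) :
    2 ≤ sin (π / (2 * r)) ^ 2 * ((r : ℝ) ^ 2 - r + 2) := by
  obtain rfl | rfl | hr4 : r = 2 ∨ r = 3 ∨ 4 ≤ r := by omega
  · have : (√2 / 2) ^ 2 = (1 / 2 : ℝ) := by rw [div_pow, sq_sqrt] <;> norm_num
    norm_num [show (2 : ℝ) * 2 = 4 by norm_num, sin_pi_div_four, this]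
  · norm_num [show (2 : ℝ) * 3 = 6 by norm_num, sin_pi_div_six]
  · set x := π / (2 * r) with hx
    have hr4' : (4 : ℝ) ≤ r := by exact_mod_cast hr4
    have hx0 : 0 < x := by positivity
    have hπ : π = 2 * r * x := by rw [hx]; field_simp
    have hx8 : x ≤ π / 8 := by rw [hπ]; nlinarith
    have key := eight_mul_sq_le_sin_sq_mul x hx0.le hx8
    rw [hπ] at key
    nlinarith [sq_pos_of_pos hx0]

section

variable {s ρ : ℝ} {n : ℕ}

theorem one_sub_mul_sq_sub_mul_pow_le (hs0 : 0 ≤ s) (hs1 : s ≤ 1) (hs : 2 ≤ s * (n ^ 2 - n + 2))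
    (hρ0 : 0 ≤ ρ) (hρ1 : ρ ≤ 1) :
    1 - (1 - s) * ρ ^ 2 - s * ρ ^ n ≤ s * n ^ 2 * (1 - ρ) := by
  have h2 := one_sub_pow_le_mul_one_sub 2 hρ0
  have hρn := one_sub_pow_le_mul_one_sub n hρ0
  calc 1 - (1 - s) * ρ ^ 2 - s * ρ ^ n = (1 - s) * (1 - ρ ^ 2) + s * (1 - ρ ^ n) := by ring
    _ ≤ (1 - s) * (2 * (1 - ρ)) + s * (n * (1 - ρ)) := by push_cast at h2; gcongr
    _ = (2 - 2 * s + s * n) * (1 - ρ) := by ring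
    _ ≤ s * n ^ 2 * (1 - ρ) := by gcongr; linarith

theorem one_sub_mul_sq_sub_mul_pow_mul_cos_le (hn : n ≠ 0) (hs0 : 0 ≤ s) (hs1 : s ≤ 1)
    (hs : 2 ≤ s * (n ^ 2 - n + 2)) (hρ0 : 0 ≤ ρ) (hρ1 : ρ ≤ 1) (θ : ℝ) :
    1 - (1 - s) * ρ ^ 2 - s * (ρ ^ n * cos (n * θ)) ≤ s * n ^ 2 * (1 - ρ * cos θ) := by
  have hrad := one_sub_mul_sq_sub_mul_pow_le hs0 hs1 hs hρ0 hρ1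
  have hang := one_sub_cos_nat_mul_le n θ
  have hpow : ρ ^ n ≤ ρ := pow_le_of_le_one hρ0 hρ1 hn
  have hcos : 0 ≤ 1 - cos (n * θ) := by linarith [cos_le_one (n * θ)]
  calc 1 - (1 - s) * ρ ^ 2 - s * (ρ ^ n * cos (n * θ))
      = (1 - (1 - s) * ρ ^ 2 - s * ρ ^ n) + s * ρ ^ n * (1 - cos (n * θ)) := by ring
    _ ≤ s * n ^ 2 * (1 - ρ) + s * ρ * (n ^ 2 * (1 - cos θ)) := by gcongr
    _ = s * n ^ 2 * (1 - ρ * cos θ) := by ring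

end

theorem stmt6_general (r : ℕ) (hr : 2 ≤ r) (z : ℂ)
    (hz1 : ‖z‖ ≤ 1) :
    1 - (1 - sin (π / (2 * r)) ^ 2) * ‖z‖ ^ 2
      - sin (π / (2 * r)) ^ 2 * (z ^ r).re
    ≤ sin (π / (2 * r)) ^ 2 * (r : ℝ) ^ 2 * (1 - z.re) := by
  rw [← Complex.norm_mul_cos_arg z, Complex.re_pow_eq_norm_pow_mul_cos]
  exact one_sub_mul_sq_sub_mul_pow_mul_cos_le (by omega) (sq_nonneg _) (sin_sq_le_one _)
    (two_le_sin_sq_pi_div_two_mul_mul r hr) (norm_nonneg z) hz1 z.arg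

/-- For `z ∈ ℂ` with `0 < |z| ≤ 1` and `arg z ∈ [0, π/r]`, `r ≥ 2`, and
`a = sin(π/(2r))`, one has `a²r²(1 − Re z) ≥ 1 − (1−a²)|z|² − a²·Re(z^r)`. -/
theorem stmt6 (r : ℕ) (hr : 2 ≤ r) (z : ℂ)
    (hz0 : 0 < ‖z‖) (hz1 : ‖z‖ ≤ 1)
    (harg0 : 0 ≤ z.arg) (harg1 : z.arg ≤ π / r) :
    1 - (1 - sin (π / (2 * r)) ^ 2) * ‖z‖ ^ 2
      - sin (π / (2 * r)) ^ 2 * (z ^ r).re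
    ≤ sin (π / (2 * r)) ^ 2 * (r : ℝ) ^ 2 * (1 - z.re) :=
  stmt6_general r hr z hz1
end

section
/- Let r ≥ 2 be an integer and set a = sin(π/(2r)). Then for all t ∈ (0,1] and θ ∈ [0, π/r], (1−a²)t² + a²t^r·cos(rθ) ≤ t·cos(θ). -/
open Real Set

/-- Key: for `x ∈ [0, π/(2r)]`, `sin x ≤ sin (π/(2r)) * sin (r x)`. -/
lemma key_sin (r : ℕ) (hr : 2 ≤ r) (x : ℝ) (hx0 : 0 ≤ x) (hx1 : x ≤ π / (2 * r)) :
    sin x ≤ sin (π / (2 * r)) * sin (r * x) := by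
  have hrR : (2:ℝ) ≤ (r:ℝ) := by exact_mod_cast hr
  have hrpos : (0:ℝ) < r := by linarith
  set c : ℝ := π / (2 * r) with hc
  set a : ℝ := sin c with ha
  have hcpos : 0 < c := by positivity
  have hcle : c ≤ π / 4 := by
    rw [hc]
    gcongr
    linarith
  have hcle2 : c ≤ π / 2 := by linarith [pi_pos]
  have hrc : (r:ℝ) * c = π / 2 := by field_simp [hc]; rw [hc]; field_simp
  -- a lower bound
  have ha_lb : 1 / (r:ℝ) ≤ a := by
    have h := mul_le_sin hcpos.le hcle2
    have hπ : (2:ℝ) / π * c = 1 / r := by rw [hc]; field_simp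
    rw [hπ] at h; exact h
  have ha0 : 0 ≤ a := le_trans (by positivity) ha_lb
  -- concavity of f x = a * sin (r x) - sin x on [0, c]
  set f : ℝ → ℝ := fun x => a * sin (r * x) - sin x with hf
  have hderiv : ∀ y : ℝ, HasDerivAt f (a * r * cos (r * y) - cos y) y := by
    intro y
    have h1 : HasDerivAt (fun y : ℝ => (r:ℝ) * y) ((r:ℝ)) y := by
      simpa using (hasDerivAt_id y).const_mul (r:ℝ)
    have h2 : HasDerivAt (fun y : ℝ => sin ((r:ℝ) * y)) (cos ((r:ℝ)*y) * r) y :=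
      (Real.hasDerivAt_sin ((r:ℝ)*y)).comp y h1
    have h3 := (h2.const_mul a).sub (Real.hasDerivAt_sin y)
    exact h3.congr_deriv (by ring)
  set f' : ℝ → ℝ := fun y => a * r * cos (r * y) - cos y with hf'
  have hderiv2 : ∀ y : ℝ, HasDerivAt f' (-(a * r * r * sin (r * y)) + sin y) y := by
    intro y
    have h1 : HasDerivAt (fun y : ℝ => (r:ℝ) * y) ((r:ℝ)) y := by
      simpa using (hasDerivAt_id y).const_mul (r:ℝ)
    have h2 : HasDerivAt (fun y : ℝ => cos ((r:ℝ) * y)) (-sin ((r:ℝ)*y) * r) y :=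
      (Real.hasDerivAt_cos ((r:ℝ)*y)).comp y h1
    have h3 := (h2.const_mul (a * r)).sub (Real.hasDerivAt_cos y)
    exact h3.congr_deriv (by ring)
  have hconc : ConcaveOn ℝ (Icc 0 c) f := by
    apply concaveOn_of_hasDerivWithinAt2_nonpos (convex_Icc 0 c)
      (Continuous.continuousOn (by fun_prop))
      (fun y hy => (hderiv y).hasDerivWithinAt)
      (fun y hy => (hderiv2 y).hasDerivWithinAt)
    intro y hy
    rw [interior_Icc] at hy
    obtain ⟨hy0, hyc⟩ := hy
    have hry : y ≤ r * y := by nlinarith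
    have hry2 : r * y ≤ π / 2 := by
      rw [← hrc]; nlinarith
    have hs1 : sin y ≤ sin (r * y) :=
      sin_le_sin_of_le_of_le_pi_div_two (by linarith) hry2 hry
    have hs0 : 0 ≤ sin (r * y) := sin_nonneg_of_nonneg_of_le_pi (by positivity) (by linarith [pi_pos])
    have har : (1:ℝ) ≤ a * r := by
      have h := mul_le_mul_of_nonneg_right ha_lb hrpos.le
      rwa [one_div, inv_mul_cancel₀ (ne_of_gt hrpos)] at h
    nlinarith [mul_le_mul_of_nonneg_right har (mul_nonneg hrpos.le hs0), hs1, hs0, hrR]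
  -- endpoints
  have hf0 : f 0 = 0 := by simp [hf]
  have hfc : f c = 0 := by simp [hf, hrc, ha]
  -- combination
  have hxc : x ∈ Icc (0:ℝ) c := ⟨hx0, hx1⟩
  have hxcomb : x = (1 - x / c) • (0:ℝ) + (x / c) • c := by
    field_simp
    rw [smul_zero, zero_add, smul_eq_mul, div_mul_cancel₀ x hcpos.ne']
  have hb0 : (0:ℝ) ≤ x / c := by positivity
  have hab0 : (0:ℝ) ≤ 1 - x/c := by
    rw [sub_nonneg]; exact (div_le_one hcpos).2 hx1
  have h2 := hconc.2 (left_mem_Icc.2 hcpos.le) (right_mem_Icc.2 hcpos.le)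
    hab0 hb0 (by ring)
  rw [← hxcomb, hf0, hfc] at h2
  simp only [smul_eq_mul, mul_zero, add_zero] at h2
  have : 0 ≤ f x := by linarith
  have h3 : 0 ≤ a * sin (r * x) - sin x := h2
  linarith

set_option maxHeartbeats 1000000 in
/-- For `r ≥ 2`, `a = sin(π/(2r))`, `t ∈ (0,1]` and `θ ∈ [0, π/r]`:
`(1−a²)t² + a²·t^r·cos(rθ) ≤ t·cos θ`. -/
theorem stmt7 (r : ℕ) (hr : 2 ≤ r) (t θ : ℝ)
    (ht0 : 0 < t) (ht1 : t ≤ 1) (hθ0 : 0 ≤ θ) (hθ1 : θ ≤ π / r) :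
    (1 - sin (π / (2 * r)) ^ 2) * t ^ 2
      + sin (π / (2 * r)) ^ 2 * t ^ r * cos (r * θ)
    ≤ t * cos θ := by
  have hrR : (2:ℝ) ≤ (r:ℝ) := by exact_mod_cast hr
  have hrpos : (0:ℝ) < r := by linarith
  set a : ℝ := sin (π / (2 * r)) with ha
  have ha1 : a ≤ 1 := sin_le_one _
  have ha0 : 0 ≤ a := sin_nonneg_of_nonneg_of_le_pi (by positivity)
    (by rw [div_le_iff₀ (by linarith)]; nlinarith [pi_pos])
  have hθπ : π / (r:ℝ) ≤ π / 2 := by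
    apply div_le_div_of_nonneg_left pi_pos.le (by norm_num) hrR
  -- identity helpers
  have half_id : ∀ x : ℝ, cos x = 1 - 2 * sin (x / 2) ^ 2 := by
    intro x
    have h := Real.cos_two_mul (x / 2)
    have h2 := Real.sin_sq_add_cos_sq (x / 2)
    have h3 : (2:ℝ) * (x / 2) = x := by ring
    rw [h3] at h
    linarith
  -- Key inequality at t = 1
  have hK : 1 - cos θ ≤ a ^ 2 * (1 - cos (r * θ)) := by
    have hx1 : θ / 2 ≤ π / (2 * r) := by
      have : π / (2 * (r:ℝ)) = (π / r) / 2 := by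
        rw [div_div, mul_comm]
      rw [this]; linarith
    have hkey := key_sin r hr (θ / 2) (by linarith) hx1
    have hs0 : 0 ≤ sin (θ / 2) := sin_nonneg_of_nonneg_of_le_pi (by linarith)
      (by nlinarith [pi_pos, hx1, hrR])
    have e1 := half_id θ
    have e2 := half_id (r * θ)
    have e3 : (r:ℝ) * θ / 2 = (r:ℝ) * (θ / 2) := by ring
    rw [e3] at e2
    nlinarith [hkey, hs0, sq_nonneg (a * sin ((r:ℝ) * (θ/2)) - sin (θ/2)), mul_self_nonneg a]
  -- cos θ lower bound
  have hbl : 1 - 2 * a ^ 2 ≤ cos θ := by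
    have hcc : cos (π / r) ≤ cos θ :=
      cos_le_cos_of_nonneg_of_le_pi hθ0 (by linarith [pi_pos]) hθ1
    have e := half_id (π / r)
    have e4 : π / (r:ℝ) / 2 = π / (2 * r) := by ring
    rw [e4] at e
    rw [ha]; linarith
  -- r * a^2 ≤ 1
  have hra2 : (r:ℝ) * a ^ 2 ≤ 1 := by
    rcases eq_or_lt_of_le hr with h2 | h3
    · subst h2
      rw [ha]
      norm_num [Real.sin_pi_div_four]
      rw [div_pow, Real.sq_sqrt (by norm_num : (0:ℝ) ≤ 2)]
      norm_num
    · have hr3 : (3:ℝ) ≤ r := by exact_mod_cast h3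
      have hsle : a ≤ π / (2 * r) := by rw [ha]; exact Real.sin_le (by positivity)
      have hpi : π < 3.15 := pi_lt_d2
      have h2ra : a * (2 * (r:ℝ)) ≤ π := (le_div_iff₀ (by positivity)).1 hsle
      have hsq : (a * (2 * (r:ℝ))) * (a * (2 * (r:ℝ))) ≤ π * π :=
        mul_le_mul h2ra h2ra (by positivity) pi_pos.le
      have h4 : 4 * (r:ℝ)^2 * a^2 ≤ 9.9225 := by nlinarith [hsq, hpi, pi_pos]
      nlinarith [h4, hr3, hrpos]
  have hCb : -1 ≤ cos (r * θ) := neg_one_le_cos _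
  have hCb' : cos (r * θ) ≤ 1 := cos_le_one _
  have ht2 : t ^ 2 ≤ t := by nlinarith
  rcases le_or_gt 0 (cos (r * θ)) with hC | hC
  · -- cos (rθ) ≥ 0
    have htr : t ^ r ≤ t ^ 2 := pow_le_pow_of_le_one ht0.le ht1 hr
    have s1 : a ^ 2 * t ^ r * cos (r * θ) ≤ a ^ 2 * t ^ 2 * cos (r * θ) := by
      apply mul_le_mul_of_nonneg_right _ hC
      exact mul_le_mul_of_nonneg_left htr (sq_nonneg a)
    have s2 : 0 ≤ 1 - a ^ 2 + a ^ 2 * cos (r * θ) := by nlinarith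
    have s3 : (1 - a ^ 2 + a ^ 2 * cos (r * θ)) * t ^ 2
        ≤ (1 - a ^ 2 + a ^ 2 * cos (r * θ)) * t :=
      mul_le_mul_of_nonneg_left ht2 s2
    have s4 : (1 - a ^ 2 + a ^ 2 * cos (r * θ)) * t ≤ cos θ * t := by
      apply mul_le_mul_of_nonneg_right _ ht0.le
      linarith
    linarith [s1, s3, s4]
  · -- cos (rθ) < 0
    have hCneg : a ^ 2 * cos (r * θ) ≤ 0 :=
      mul_nonpos_of_nonneg_of_nonpos (sq_nonneg a) hC.le
    set u : ℝ := t ^ (r - 1) with hu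
    have hber : 1 + ((r:ℝ) - 1) * (t - 1) ≤ u := by
      have h := one_add_mul_le_pow (show (-2:ℝ) ≤ t - 1 by linarith) (r - 1)
      have hc : ((r - 1 : ℕ) : ℝ) = (r:ℝ) - 1 := by
        push_cast [Nat.cast_sub (by omega : 1 ≤ r)]; ring
      rw [hc] at h
      simpa [show (1:ℝ) + (t - 1) = t by ring] using h
    have hpowsplit : t ^ r = u * t := by
      rw [hu, ← pow_succ, Nat.sub_add_cancel (by omega)]
    have hCt : a ^ 2 * cos (r * θ) * t ≤ 0 :=
      mul_nonpos_of_nonpos_of_nonneg hCneg ht0.le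
    have hber' : (a ^ 2 * cos (r * θ) * t) * u
        ≤ (a ^ 2 * cos (r * θ) * t) * (1 + ((r:ℝ) - 1) * (t - 1)) :=
      mul_le_mul_of_nonpos_left hber hCt
    have hA : a ^ 2 * cos (r * θ) * (2 - (r:ℝ)) - cos θ ≤ 0 := by
      have h1 : a ^ 2 * (-cos (r * θ)) ≤ a ^ 2 := by
        nlinarith [sq_nonneg a, hCb]
      have h2 : 0 ≤ ((r:ℝ) - 2) * (a ^ 2 - a ^ 2 * (-cos (r * θ))) :=
        mul_nonneg (by linarith) (by linarith)
      nlinarith [h2, hra2, hbl]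
    have hB : (1 - a ^ 2) + a ^ 2 * cos (r * θ) - cos θ ≤ 0 := by nlinarith [hK]
    have e1 : t * (1 - t) * (a ^ 2 * cos (r * θ) * (2 - (r:ℝ)) - cos θ) ≤ 0 :=
      mul_nonpos_of_nonneg_of_nonpos (by nlinarith) hA
    have e2 : t ^ 2 * ((1 - a ^ 2) + a ^ 2 * cos (r * θ) - cos θ) ≤ 0 :=
      mul_nonpos_of_nonneg_of_nonpos (by positivity) hB
    rw [hpowsplit]
    nlinarith [hber', e1, e2, hCb, hCb']
end

section
/- Let M ∈ ℝ^{r×r} with singular values σ₁(M) ≥ … ≥ σ_r(M). Then max over Q ∈ SO(r) of Tr(QM) equals Σ_i σ_i(M) if det(M) ≥ 0, and equals Σ_i σ_i(M) − 2σ_r(M) if det(M) < 0. -/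
/-!
Writing `M = U diag(σ) V` and substituting `A = V Q U`, `Tr(QM) = ∑ Aᵢᵢ σᵢ` where `A` ranges over
the orthogonal matrices of determinant `det U · det V`. Diagonal entries of an orthogonal matrix
are at most `1`, which bounds the sum by `∑ σᵢ`. If `det A = -1`, then `A y = -y` for a unit
vector `y`, and `A + 2 y yᵀ` (which is `A` composed with the reflection along `y`) is orthogonal,
so `Tr A ≤ r - 2`; as `σ_r` is the smallest weight, this deficit of `2` costs at least `2 σ_r`.
Diagonal sign matrices attain both bounds.
-/

open Matrix Finset

lemma sum_mul_le_sum_sub_mul {ι : Type*} [Fintype ι] {a σ : ι → ℝ} {m : ι} {k : ℝ}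
    (ha : ∀ i, a i ≤ 1) (hk : ∑ i, a i ≤ Fintype.card ι - k) (hm : ∀ i, σ m ≤ σ i)
    (hσm : 0 ≤ σ m) : ∑ i, a i * σ i ≤ ∑ i, σ i - k * σ m := by
  have hcard : k ≤ ∑ i, (1 - a i) := by
    rw [sum_sub_distrib, sum_const, card_univ, nsmul_one]; linarith
  calc ∑ i, a i * σ i = ∑ i, σ i - ∑ i, (1 - a i) * σ i := by
        rw [← sum_sub_distrib]; congr 1 with i; ring
    _ ≤ ∑ i, σ i - ∑ i, (1 - a i) * σ m := by
        gcongr with i; exacts [sub_nonneg.2 (ha i), hm i]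
    _ ≤ ∑ i, σ i - k * σ m := by
        rw [← sum_mul]; gcongr

namespace Matrix

variable {n : Type*} [Fintype n] [DecidableEq n] {A : Matrix n n ℝ}

lemma diag_le_one_of_mem_orthogonalGroup (hA : A ∈ orthogonalGroup n ℝ) (i : n) : A i i ≤ 1 :=
  (le_abs_self _).trans (entry_norm_bound_of_unitary hA i i)

lemma det_eq_one_or_neg_one_of_mem_orthogonalGroup (hA : A ∈ orthogonalGroup n ℝ) :
    A.det = 1 ∨ A.det = -1 :=
  Unitary.mem_iff_eq_one_or_eq_neg_one.mp (det_of_mem_unitary hA)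

lemma exists_dotProduct_self_eq_one_mulVec_eq_neg (hA : A ∈ orthogonalGroup n ℝ)
    (hdet : A.det = -1) : ∃ y : n → ℝ, y ⬝ᵥ y = 1 ∧ A *ᵥ y = -y := by
  have hsing : (1 + A).det = 0 := by
    -- `Aᵀ (1 + A) = (1 + A)ᵀ`
    have h : (1 + A).det = A.det * (1 + A).det := by
      rw [← det_transpose A, ← det_mul, mul_add, mul_one,
        (mem_orthogonalGroup_iff' n ℝ).1 hA, ← det_transpose, transpose_add, transpose_one,
        add_comm]
    rw [hdet] at h
    linarith
  obtain ⟨v, hv0, hv⟩ := exists_mulVec_eq_zero_iff.2 hsing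
  have hvv : 0 < v ⬝ᵥ v := by simpa using dotProduct_star_self_pos_iff.2 hv0
  refine ⟨(√(v ⬝ᵥ v))⁻¹ • v, ?_, ?_⟩
  · rw [dotProduct_smul, smul_dotProduct, smul_smul, smul_eq_mul, ← sq, inv_pow,
      Real.sq_sqrt hvv.le, inv_mul_cancel₀ hvv.ne']
  · rw [add_mulVec, one_mulVec, add_eq_zero_iff_neg_eq] at hv
    rw [mulVec_smul, ← hv, smul_neg]

lemma add_two_smul_vecMulVec_mem_orthogonalGroup (hA : A ∈ orthogonalGroup n ℝ) {y : n → ℝ}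
    (hy : y ⬝ᵥ y = 1) (hAy : A *ᵥ y = -y) :
    A + (2 : ℝ) • vecMulVec y y ∈ orthogonalGroup n ℝ := by
  have hAA : Aᵀ * A = 1 := (mem_orthogonalGroup_iff' n ℝ).1 hA
  have hAty : Aᵀ *ᵥ y = -y :=
    calc Aᵀ *ᵥ y = -(Aᵀ *ᵥ (A *ᵥ y)) := by rw [hAy, mulVec_neg, neg_neg]
      _ = -y := by rw [mulVec_mulVec, hAA, one_mulVec]
  set P := vecMulVec y y
  have hAP : Aᵀ * P = -P := by rw [mul_vecMulVec, hAty, neg_vecMulVec]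
  have hPA : P * A = -P := by rw [vecMulVec_mul, ← mulVec_transpose, hAty, vecMulVec_neg]
  have hPP : P * P = P := by rw [vecMulVec_mul_vecMulVec, hy, one_smul]
  have hPt : Pᵀ = P := transpose_vecMulVec y y
  rw [mem_orthogonalGroup_iff', transpose_add, transpose_smul, hPt]
  simp only [add_mul, mul_add, smul_mul_assoc, mul_smul_comm, hAA, hAP, hPA, hPP]
  module

lemma trace_le_card_of_mem_orthogonalGroup (hA : A ∈ orthogonalGroup n ℝ) :
    A.trace ≤ Fintype.card n := by
  simpa [trace] using sum_le_sum fun i (_ : i ∈ univ) => diag_le_one_of_mem_orthogonalGroup hA i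

lemma trace_le_card_sub_two_of_det_eq_neg_one (hA : A ∈ orthogonalGroup n ℝ)
    (hdet : A.det = -1) : A.trace ≤ Fintype.card n - 2 := by
  obtain ⟨y, hy, hAy⟩ := exists_dotProduct_self_eq_one_mulVec_eq_neg hA hdet
  have htrace := trace_le_card_of_mem_orthogonalGroup
    (add_two_smul_vecMulVec_mem_orthogonalGroup hA hy hAy)
  rw [trace_add, trace_smul, trace_vecMulVec, hy, smul_eq_mul] at htrace
  linarith

theorem isGreatest_sum_diag_mul {σ : n → ℝ} {m : n} (hm : ∀ i, σ m ≤ σ i) (hσm : 0 ≤ σ m)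
    {s : ℝ} (hs : s = 1 ∨ s = -1) :
    IsGreatest {x | ∃ A ∈ orthogonalGroup n ℝ, A.det = s ∧ ∑ i, A i i * σ i = x}
      (∑ i, σ i - (1 - s) * σ m) := by
  refine ⟨⟨diagonal (Function.update 1 m s), ?_, ?_, ?_⟩, ?_⟩
  · rw [mem_orthogonalGroup_iff', diagonal_transpose, diagonal_mul_diagonal, ← diagonal_one]
    congr 1 with i
    rcases eq_or_ne i m with rfl | hi
    · rcases hs with rfl | rfl <;> simp
    · simp [hi]
  · simp [det_diagonal, prod_update_of_mem]
  · have hoff : ∀ i ∈ univ.erase m, Function.update (1 : n → ℝ) m s i * σ i = σ i := by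
      intro i hi
      rw [Function.update_of_ne (ne_of_mem_erase hi), Pi.one_apply, one_mul]
    simp only [diagonal_apply_eq]
    rw [← add_sum_erase _ _ (mem_univ m), ← add_sum_erase _ σ (mem_univ m), sum_congr rfl hoff,
      Function.update_self]
    ring
  · rintro x ⟨A, hA, rfl, rfl⟩
    rcases det_eq_one_or_neg_one_of_mem_orthogonalGroup hA with hdet | hdet
    · refine sum_mul_le_sum_sub_mul (diag_le_one_of_mem_orthogonalGroup hA) ?_ hm hσm
      rw [hdet, sub_self, sub_zero]
      exact trace_le_card_of_mem_orthogonalGroup hA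
    · refine sum_mul_le_sum_sub_mul (diag_le_one_of_mem_orthogonalGroup hA) ?_ hm hσm
      rw [hdet, show (1 : ℝ) - -1 = 2 by norm_num]
      exact trace_le_card_sub_two_of_det_eq_neg_one hA hdet

lemma trace_mul_diagonal (A : Matrix n n ℝ) (d : n → ℝ) :
    (A * diagonal d).trace = ∑ i, A i i * d i := by
  simp [trace, mul_diagonal]

lemma setOf_trace_mul_eq_setOf_sum_diag_mul {U V : Matrix n n ℝ}
    (hU : U ∈ orthogonalGroup n ℝ) (hV : V ∈ orthogonalGroup n ℝ) (σ : n → ℝ) :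
    {x | ∃ Q ∈ orthogonalGroup n ℝ, Q.det = 1 ∧ (Q * (U * diagonal σ * V)).trace = x} =
      {x | ∃ A ∈ orthogonalGroup n ℝ, A.det = U.det * V.det ∧ ∑ i, A i i * σ i = x} := by
  have htrace (Q : Matrix n n ℝ) :
      (Q * (U * diagonal σ * V)).trace = ∑ i, (V * Q * U) i i * σ i := by
    rw [← trace_mul_diagonal, ← Matrix.mul_assoc, trace_mul_comm]
    simp only [Matrix.mul_assoc]
  ext x
  constructor
  · rintro ⟨Q, hQ, hdet, rfl⟩
    refine ⟨V * Q * U, mul_mem (mul_mem hV hQ) hU, ?_, (htrace Q).symm⟩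
    rw [det_mul, det_mul, hdet]; ring
  · rintro ⟨A, hA, hdet, rfl⟩
    refine ⟨star V * A * star U, mul_mem (mul_mem (Unitary.star_mem hV) hA) (Unitary.star_mem hU),
      ?_, ?_⟩
    · have hVV := congrArg det (Unitary.star_mul_self_of_mem hV)
      have hUU := congrArg det (Unitary.mul_star_self_of_mem hU)
      rw [det_mul, det_one] at hVV hUU
      rw [det_mul, det_mul, hdet]
      linear_combination (U.det * (star U).det) * hVV + hUU
    · rw [htrace]
      congr 1 with i
      rw [← Matrix.mul_assoc, ← Matrix.mul_assoc, Unitary.mul_star_self_of_mem hV, Matrix.one_mul,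
        Matrix.mul_assoc, Unitary.star_mul_self_of_mem hU, Matrix.mul_one]

end Matrix

/-- For `M ∈ ℝ^{r×r}` with singular value decomposition
`M = U · diag σ · V` (`U, V` orthogonal, `σ` antitone and nonnegative),
the maximum of `Tr(QM)` over `Q ∈ SO(r)` equals `∑ σᵢ` when `det M ≥ 0`
and `∑ σᵢ − 2 σ_r` when `det M < 0`, and it is attained. -/
theorem stmt13 {r : ℕ} (hr : 0 < r) (M : Matrix (Fin r) (Fin r) ℝ)
    (σ : Fin r → ℝ) (hσ0 : ∀ i, 0 ≤ σ i) (hσmono : Antitone σ)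
    (U V : Matrix (Fin r) (Fin r) ℝ)
    (hU : U ∈ Matrix.orthogonalGroup (Fin r) ℝ)
    (hV : V ∈ Matrix.orthogonalGroup (Fin r) ℝ)
    (hM : M = U * Matrix.diagonal σ * V) :
    IsGreatest
      {x : ℝ | ∃ Q ∈ Matrix.orthogonalGroup (Fin r) ℝ, Q.det = 1 ∧ (Q * M).trace = x}
      (if 0 ≤ M.det then ∑ i, σ i else (∑ i, σ i) - 2 * σ ⟨r - 1, by omega⟩) := by
  set L : Fin r := ⟨r - 1, by omega⟩
  have hL (i : Fin r) : σ L ≤ σ i := hσmono (Fin.le_def.2 (by simp only [L]; omega))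
  set s := U.det * V.det
  have hs : s = 1 ∨ s = -1 :=
    Unitary.mem_iff_eq_one_or_eq_neg_one.mp <|
      mul_mem (det_of_mem_unitary hU) (det_of_mem_unitary hV)
  have hdetM : M.det = s * ∏ i, σ i := by rw [hM, det_mul, det_mul, det_diagonal]; ring
  have hprod : 0 ≤ ∏ i, σ i := prod_nonneg fun i _ => hσ0 i
  have hvalue : (if 0 ≤ M.det then ∑ i, σ i else ∑ i, σ i - 2 * σ L) =
      ∑ i, σ i - (1 - s) * σ L := by
    rcases hs with hs | hs
    · rw [if_pos (by rw [hdetM, hs, one_mul]; exact hprod), hs]; ring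
    · split_ifs with hMdet
      · have hzero : ∏ i, σ i = 0 := by rw [hdetM, hs] at hMdet; linarith
        obtain ⟨i, -, hi⟩ := prod_eq_zero_iff.1 hzero
        rw [le_antisymm (hi ▸ hL i) (hσ0 L)]; ring
      · rw [hs]; ring
  rw [hvalue, hM, setOf_trace_mul_eq_setOf_sum_diag_mul hU hV]
  exact isGreatest_sum_diag_mul hL (hσ0 L) hs
end

section
/- Let V be a finite-dimensional real inner product space, C ⊆ V a closed convex cone cut out by C = {z : ⟨z,α_j⟩ ≥ 0 for all j ∈ [m]} for unit vectors α_1,…,α_m satisfying ⟨α_i, α_j⟩ ≤ 0 for all i ≠ j, and let s_i(z) = z − 2⟨z,α_i⟩α_i be the reflection in the hyperplane orthogonal to α_i. Then for each i ∈ [m], the set C ∪ s_i(C) is convex; in fact C ∪ s_i(C) = {z ∈ V : ⟨z,α_j⟩ ≥ 0 and ⟨z, s_i(α_j)⟩ ≥ 0 for all j ∈ [m] with j ≠ i}. -/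
open scoped RealInnerProductSpace

/-- Let `α₁,…,α_m` be unit vectors with pairwise nonpositive inner products,
`C` the dual cone `{z : ⟨z,αⱼ⟩ ≥ 0 ∀ j}`, and `sᵢ` the reflection across
`αᵢ^⊥`. Then `C ∪ sᵢ(C)` is convex; in fact it equals
`{z : ⟨z,αⱼ⟩ ≥ 0 and ⟨z, sᵢ(αⱼ)⟩ ≥ 0 for all j ≠ i}`. -/
theorem stmt17 {V : Type*} [NormedAddCommGroup V] [InnerProductSpace ℝ V]
    [FiniteDimensional ℝ V] {m : ℕ}
    (α : Fin m → V) (hunit : ∀ j, ‖α j‖ = 1)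
    (hobtuse : ∀ i j, i ≠ j → ⟪α i, α j⟫ ≤ 0)
    (C : Set V) (hC : C = {z : V | ∀ j, 0 ≤ ⟪z, α j⟫})
    (s : Fin m → V → V) (hs : ∀ i z, s i z = z - (2 * ⟪z, α i⟫) • α i)
    (i : Fin m) :
    Convex ℝ (C ∪ s i '' C) ∧
    C ∪ s i '' C
      = {z : V | ∀ j, j ≠ i → 0 ≤ ⟪z, α j⟫ ∧ 0 ≤ ⟪z, s i (α j)⟫} := by
  subst hC
  have hii : ⟪α i, α i⟫ = 1 := by
    rw [real_inner_self_eq_norm_sq, hunit i]; norm_num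
  have hadj : ∀ z w : V, ⟪s i z, w⟫ = ⟪z, s i w⟫ := by
    intro z w
    rw [hs, hs, inner_sub_left, inner_sub_right, real_inner_smul_left,
      real_inner_smul_right, real_inner_comm (α i) w]
    ring
  have hinv : ∀ z, s i (s i z) = z := by
    intro z
    rw [hs, hs, inner_sub_left, real_inner_smul_left, hii]
    match_scalars <;> ring
  have hkey : ∀ (z : V) (j : Fin m), ⟪z, s i (α j)⟫ =
      ⟪z, α j⟫ - 2 * ⟪α j, α i⟫ * ⟪z, α i⟫ := by
    intro z j
    rw [hs, inner_sub_right, real_inner_smul_right]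
  have heq : {z : V | ∀ j, 0 ≤ ⟪z, α j⟫} ∪ s i '' {z : V | ∀ j, 0 ≤ ⟪z, α j⟫}
      = {z : V | ∀ j, j ≠ i → 0 ≤ ⟪z, α j⟫ ∧ 0 ≤ ⟪z, s i (α j)⟫} := by
    ext z
    constructor
    · rintro (hz | ⟨w, hw, rfl⟩) j hj
      · refine ⟨hz j, ?_⟩
        rw [hkey]
        nlinarith [hz j, hz i, hobtuse j i hj]
      · constructor
        · rw [hadj, hkey]
          nlinarith [hw j, hw i, hobtuse j i hj]
        · rw [hadj, hinv]
          exact hw j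
    · intro hz
      by_cases h : 0 ≤ ⟪z, α i⟫
      · left
        intro j
        by_cases hj : j = i
        · subst hj; exact h
        · exact (hz j hj).1
      · right
        refine ⟨s i z, ?_, hinv z⟩
        intro j
        by_cases hj : j = i
        · rw [hj]
          have h2 : ⟪s i z, α i⟫ = -⟪z, α i⟫ := by
            rw [hs, inner_sub_left, real_inner_smul_left, hii]; ring
          rw [h2]; linarith
        · rw [hadj]
          exact (hz j hj).2
  refine ⟨?_, heq⟩
  rw [heq]
  intro x hx y hy a b ha hb hab
  intro j hj
  constructor <;> simp only [inner_add_left, real_inner_smul_left] <;>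
    nlinarith [(hx j hj).1, (hy j hj).1, (hx j hj).2, (hy j hj).2]
end
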